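/- arXiv:0910.3344 — 4 statements merged into one kernel-verified Lean document; each statement's English description precedes it below -/
import Mathlib

section
/- For every μ ∈ ℂ and every s ∈ ℂ with Re s > |Re μ|, the Mellin transform ∫₀^∞ K_μ(2πy)·y^{s−1} dy converges absolutely and equals (1/4)·π^{−s}·Γ((s+μ)/2)·Γ((s−μ)/2). -/
open MeasureTheory Real Set

/-- The modified Bessel function of the second kind `K_μ(x)`, defined for `x > 0` by
`K_μ(x) = ∫₀^∞ exp(−x·cosh t)·cosh(μt) dt`. -/
noncomputable def besselK (μ : ℂ) (x : ℝ) : ℂ :=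
  ∫ t in Ioi (0 : ℝ), Complex.exp (-(x : ℂ) * Real.cosh t) * Complex.cosh (μ * t)


lemma ofReal_ne_zero_of_pos {x : ℝ} (hx : 0 < x) : (x : ℂ) ≠ 0 := by exact_mod_cast hx.ne'

-- cpow helpers

lemma inv_cpow_ofReal {x : ℝ} (hx : 0 < x) (w : ℂ) :
    ((x⁻¹ : ℝ) : ℂ) ^ w = ((x : ℂ) ^ w)⁻¹ := by
  rw [Complex.ofReal_inv, Complex.inv_cpow]
  rw [Complex.arg_ofReal_of_nonneg hx.le]
  exact Real.pi_ne_zero.symm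

lemma norm_cpow_ofReal {x : ℝ} (hx : 0 < x) (w : ℂ) :
    ‖((x : ℂ)) ^ w‖ = x ^ w.re := by
  rw [Complex.norm_cpow_eq_rpow_re_of_pos hx]

-- bounded on [1,∞)
lemma exists_bound_exp_mul_rpow {c : ℝ} (hc : 0 < c) (q : ℝ) :
    ∃ M : ℝ, ∀ t : ℝ, 1 ≤ t → Real.exp (-(c * t)) * t ^ q ≤ M := by
  have h0 := tendsto_rpow_mul_exp_neg_mul_atTop_nhds_zero q c hc
  have h1 : ∀ᶠ t in Filter.atTop, t ^ q * Real.exp (-c * t) < 1 :=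
    h0.eventually_lt_const one_pos
  obtain ⟨A, hA⟩ := h1.exists_forall_of_atTop
  have hcomp : IsCompact (Icc (1 : ℝ) A) := isCompact_Icc
  have hcont : ContinuousOn (fun t : ℝ => Real.exp (-(c * t)) * t ^ q) (Icc 1 A) := by
    apply ContinuousOn.mul (Continuous.continuousOn (by continuity))
    intro t ht
    exact (Real.continuousAt_rpow_const t q (Or.inl (by linarith [ht.1]))).continuousWithinAt
  obtain ⟨C, hC⟩ := hcomp.exists_bound_of_continuousOn hcont
  refine ⟨max C 1, fun t ht => ?_⟩
  rcases le_or_gt t A with h | h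
  · exact le_max_of_le_left ((le_abs_self _).trans ((Real.norm_eq_abs _ ▸ hC t ⟨ht, h⟩)))
  · refine le_max_of_le_right ?_
    have := hA t h.le
    rw [neg_mul] at this
    rw [mul_comm]
    linarith

lemma slice_int {c ρ : ℝ} (hc : 0 < c) :
    IntegrableOn (fun u : ℝ => Real.exp (-(c * (u + u⁻¹))) * u ^ (ρ - 1)) (Ioi 0) := by
  obtain ⟨M₁, hM₁⟩ := exists_bound_exp_mul_rpow (half_pos hc) (ρ - 1)
  obtain ⟨M₂, hM₂⟩ := exists_bound_exp_mul_rpow (half_pos hc) (1 - ρ)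
  set M := max (max M₁ M₂) 0 with hM
  have hgint : IntegrableOn (fun u : ℝ => M * Real.exp (-(c/2) * u)) (Ioi 0) :=
    (exp_neg_integrableOn_Ioi 0 (half_pos hc)).const_mul M
  refine Integrable.mono' hgint ?_ ?_
  · apply Measurable.aestronglyMeasurable
    fun_prop
  · rw [ae_restrict_iff' measurableSet_Ioi]
    refine Filter.Eventually.of_forall (fun u hu => ?_)
    rw [mem_Ioi] at hu
    have hepos : (0:ℝ) < Real.exp (-(c * (u + u⁻¹))) := Real.exp_pos _
    have hrpos : (0:ℝ) < u ^ (ρ - 1) := Real.rpow_pos_of_pos hu _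
    rw [Real.norm_eq_abs, abs_of_pos (mul_pos hepos hrpos)]
    have hsplit : Real.exp (-(c * (u + u⁻¹)))
        = Real.exp (-(c/2 * (u + u⁻¹))) * Real.exp (-(c/2 * (u + u⁻¹))) := by
      rw [← Real.exp_add]; ring_nf
    have hui : 0 < u⁻¹ := inv_pos.mpr hu
    have e1 : Real.exp (-(c/2 * (u + u⁻¹))) ≤ Real.exp (-(c/2) * u) := by
      rw [Real.exp_le_exp]; nlinarith
    rcases le_or_gt 1 u with h1 | h1
    · have e2 : Real.exp (-(c/2 * (u + u⁻¹))) * u ^ (ρ - 1) ≤ M₁ := by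
        calc Real.exp (-(c/2 * (u + u⁻¹))) * u ^ (ρ - 1)
            ≤ Real.exp (-(c/2 * u)) * u ^ (ρ - 1) := by
              gcongr
              linarith
          _ ≤ M₁ := hM₁ u h1
      calc Real.exp (-(c * (u + u⁻¹))) * u ^ (ρ - 1)
          = Real.exp (-(c/2 * (u + u⁻¹))) * (Real.exp (-(c/2 * (u + u⁻¹))) * u ^ (ρ - 1)) := by
            rw [hsplit]; ring
        _ ≤ Real.exp (-(c/2) * u) * M₁ := by
            apply mul_le_mul e1 e2 (by positivity) (Real.exp_pos _).le
        _ ≤ M * Real.exp (-(c/2) * u) := by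
            rw [mul_comm]
            have : M₁ ≤ M := le_max_of_le_left (le_max_left _ _)
            exact mul_le_mul_of_nonneg_right this (Real.exp_pos _).le
    · have h1' : 1 ≤ u⁻¹ := one_le_inv_iff₀.mpr ⟨hu, h1.le⟩
      have hre : u ^ (ρ - 1) = (u⁻¹) ^ (1 - ρ) := by
        rw [Real.inv_rpow hu.le, ← Real.rpow_neg hu.le, neg_sub]
      have e2 : Real.exp (-(c/2 * (u + u⁻¹))) * u ^ (ρ - 1) ≤ M₂ := by
        rw [hre]
        calc Real.exp (-(c/2 * (u + u⁻¹))) * (u⁻¹) ^ (1 - ρ)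
            ≤ Real.exp (-(c/2 * u⁻¹)) * (u⁻¹) ^ (1 - ρ) := by
              gcongr
              linarith
          _ ≤ M₂ := hM₂ u⁻¹ h1'
      calc Real.exp (-(c * (u + u⁻¹))) * u ^ (ρ - 1)
          = Real.exp (-(c/2 * (u + u⁻¹))) * (Real.exp (-(c/2 * (u + u⁻¹))) * u ^ (ρ - 1)) := by
            rw [hsplit]; ring
        _ ≤ Real.exp (-(c/2) * u) * M₂ := by
            apply mul_le_mul e1 e2 (by positivity) (Real.exp_pos _).le
        _ ≤ M * Real.exp (-(c/2) * u) := by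
            rw [mul_comm]
            have : M₂ ≤ M := le_max_of_le_left (le_max_right _ _)
            exact mul_le_mul_of_nonneg_right this (Real.exp_pos _).le

section betaIoi
variable {a b : ℂ}

lemma beta_image : (fun v : ℝ => v / (1+v)) '' (Ioi 0) = Ioo 0 1 := by
  ext x
  constructor
  · rintro ⟨v, hv, rfl⟩
    rw [mem_Ioi] at hv
    constructor
    · positivity
    · rw [div_lt_one (by linarith)]; linarith
  · rintro ⟨h0, h1⟩
    have hx1 : (0:ℝ) < 1 - x := by linarith
    refine ⟨x / (1 - x), by rw [mem_Ioi]; positivity, ?_⟩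
    have h2 : (0:ℝ) < 1 + x / (1 - x) := by positivity
    dsimp only
    rw [div_eq_iff h2.ne']
    field_simp
    ring

lemma beta_deriv : ∀ v ∈ Ioi (0:ℝ), HasDerivWithinAt (fun v : ℝ => v / (1+v))
    (((1+v)^2)⁻¹) (Ioi 0) v := by
  intro v hv
  rw [mem_Ioi] at hv
  have h : HasDerivAt (fun v : ℝ => v / (1+v)) ((1 * (1+v) - v * 1) / (1+v)^2) v := by
    have h2 : HasDerivAt (fun v : ℝ => 1 + v) (0 + 1) v :=
      (hasDerivAt_const v 1).add (hasDerivAt_id v)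
    rw [zero_add] at h2
    exact (hasDerivAt_id v).div h2 (by linarith)
  rw [show (1 * (1+v) - v * 1) / (1+v)^2 = ((1+v)^2)⁻¹ from by ring] at h
  exact h.hasDerivWithinAt

lemma beta_inj : InjOn (fun v : ℝ => v / (1+v)) (Ioi 0) := by
  intro x hx y hy h
  rw [mem_Ioi] at hx hy
  dsimp at h
  rw [div_eq_div_iff (by linarith) (by linarith)] at h
  nlinarith

lemma beta_pointwise {v : ℝ} (hv : 0 < v) :
    (((1+v)^2)⁻¹ : ℝ) • ((((v / (1+v) : ℝ)) : ℂ) ^ (a-1) * ((1 - ((v / (1+v) : ℝ)) : ℂ)) ^ (b-1))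
      = (v:ℂ) ^ (a-1) * ((1+v : ℝ) : ℂ) ^ (-(a+b)) := by
  have h1v : (0:ℝ) < 1 + v := by linarith
  have hw0 : ((1+v : ℝ) : ℂ) ≠ 0 := ofReal_ne_zero_of_pos h1v
  have e1 : ((v / (1+v) : ℝ) : ℂ) ^ (a-1)
      = (v:ℂ) ^ (a-1) * (((1+v:ℝ):ℂ) ^ (a-1))⁻¹ := by
    rw [div_eq_mul_inv, Complex.ofReal_mul,
      Complex.mul_cpow_ofReal_nonneg hv.le (inv_pos.mpr h1v).le,
      inv_cpow_ofReal h1v]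
  have e2 : ((1 : ℂ) - ((v / (1+v) : ℝ) : ℂ)) = (((1+v)⁻¹ : ℝ) : ℂ) := by
    push_cast
    have : (1 : ℂ) + v ≠ 0 := by exact_mod_cast h1v.ne'
    field_simp
    ring
  rw [e1, e2, inv_cpow_ofReal h1v]
  have e3 : (((1+v)^2)⁻¹ : ℝ) • ((v:ℂ) ^ (a-1) * (((1+v:ℝ):ℂ) ^ (a-1))⁻¹ *
      ((((1+v:ℝ):ℂ) ^ (b-1))⁻¹))
      = (v:ℂ) ^ (a-1) * ((((1+v:ℝ):ℂ)^2) ⁻¹ * ((((1+v:ℝ):ℂ) ^ (a-1))⁻¹ *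
        (((1+v:ℝ):ℂ) ^ (b-1))⁻¹)) := by
    rw [Complex.real_smul]
    push_cast
    ring
  rw [e3]
  congr 1
  rw [Complex.cpow_neg, ← mul_inv, ← mul_inv]
  congr 1
  rw [← Complex.cpow_natCast ((1+v:ℝ):ℂ) 2, ← Complex.cpow_add _ _ hw0,
    ← Complex.cpow_add _ _ hw0]
  norm_num
  ring_nf

lemma betaIoi (ha : 0 < a.re) (hb : 0 < b.re) :
    IntegrableOn (fun v : ℝ => (v:ℂ) ^ (a-1) * ((1+v : ℝ):ℂ) ^ (-(a+b))) (Ioi 0) ∧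
    ∫ v in Ioi (0:ℝ), (v:ℂ) ^ (a-1) * ((1+v : ℝ):ℂ) ^ (-(a+b))
      = Complex.betaIntegral a b := by
  set g : ℝ → ℂ := fun x => (x:ℂ) ^ (a-1) * ((1:ℂ) - (x:ℂ)) ^ (b-1) with hg
  have hgI : IntegrableOn g (Ioo 0 1) := by
    have := Complex.betaIntegral_convergent ha hb
    rw [intervalIntegrable_iff_integrableOn_Ioc_of_le zero_le_one] at this
    exact this.mono_set Ioo_subset_Ioc_self
  have htrans := integrableOn_image_iff_integrableOn_abs_deriv_smul measurableSet_Ioi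
    beta_deriv beta_inj g
  rw [beta_image] at htrans
  have hptw : ∀ v ∈ Ioi (0:ℝ),
      |((1+v)^2)⁻¹| • g (v / (1+v)) = (v:ℂ) ^ (a-1) * ((1+v : ℝ):ℂ) ^ (-(a+b)) := by
    intro v hv
    rw [mem_Ioi] at hv
    have h1v : (0:ℝ) < 1 + v := by linarith
    rw [abs_of_pos (by positivity), hg]
    exact beta_pointwise hv
  constructor
  · have h1 : IntegrableOn (fun v => |((1+v)^2)⁻¹| • g (v / (1+v))) (Ioi 0) :=
      htrans.mp hgI
    exact h1.congr_fun hptw measurableSet_Ioi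
  · have h2 : ∫ x in Ioo (0:ℝ) 1, g x
        = ∫ v in Ioi (0:ℝ), |((1+v)^2)⁻¹| • g (v / (1+v)) := by
      rw [← beta_image]
      exact integral_image_eq_integral_abs_deriv_smul measurableSet_Ioi beta_deriv beta_inj g
    rw [setIntegral_congr_fun measurableSet_Ioi hptw] at h2
    rw [← h2, Complex.betaIntegral, intervalIntegral.integral_of_le zero_le_one,
      integral_Ioc_eq_integral_Ioo]

lemma sq_image : (fun u : ℝ => u^2) '' (Ioi 0) = Ioi 0 := by
  ext x
  constructor
  · rintro ⟨u, hu, rfl⟩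
    rw [mem_Ioi] at hu ⊢
    positivity
  · intro hx
    rw [mem_Ioi] at hx
    exact ⟨Real.sqrt x, by rw [mem_Ioi]; positivity, Real.sq_sqrt hx.le⟩

lemma sq_deriv : ∀ u ∈ Ioi (0:ℝ), HasDerivWithinAt (fun u : ℝ => u^2) (2*u) (Ioi 0) u := by
  intro u _
  have := hasDerivAt_pow 2 u
  norm_num at this
  exact this.hasDerivWithinAt

lemma sq_inj : InjOn (fun u : ℝ => u^2) (Ioi 0) := by
  intro x hx y hy h
  rw [mem_Ioi] at hx hy
  dsimp at h
  nlinarith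

lemma sq_pointwise {a b : ℂ} {u : ℝ} (hu : 0 < u) :
    |2*u| • (((u^2 : ℝ):ℂ) ^ (a-1) * ((1+u^2 : ℝ):ℂ) ^ (-(a+b)))
      = 2 * ((u:ℂ) ^ (2*a-1) * ((1+u^2 : ℝ):ℂ) ^ (-(a+b))) := by
  have hu0 : (u:ℂ) ≠ 0 := ofReal_ne_zero_of_pos hu
  have e1 : ((u^2 : ℝ):ℂ) ^ (a-1) = (u:ℂ) ^ (a-1) * (u:ℂ) ^ (a-1) := by
    rw [sq, Complex.ofReal_mul, Complex.mul_cpow_ofReal_nonneg hu.le hu.le]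
  rw [e1, abs_of_pos (by positivity), Complex.real_smul]
  push_cast
  rw [show (2:ℂ) * u * ((u:ℂ)^(a-1) * (u:ℂ)^(a-1) * ((1+(u:ℂ)^2)) ^ (-(a+b)))
      = 2 * (((u:ℂ) * ((u:ℂ)^(a-1) * (u:ℂ)^(a-1))) * ((1+(u:ℂ)^2)) ^ (-(a+b))) from by ring]
  congr 2
  rw [← Complex.cpow_add _ _ hu0]
  nth_rewrite 1 [← Complex.cpow_one (u:ℂ)]
  rw [← Complex.cpow_add _ _ hu0]
  ring_nf

lemma sqIoi (a b : ℂ) :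
    (IntegrableOn (fun v : ℝ => (v:ℂ) ^ (a-1) * ((1+v : ℝ):ℂ) ^ (-(a+b))) (Ioi 0) ↔
     IntegrableOn (fun u : ℝ => (u:ℂ) ^ (2*a-1) * ((1+u^2 : ℝ):ℂ) ^ (-(a+b))) (Ioi 0)) ∧
    ∫ v in Ioi (0:ℝ), (v:ℂ) ^ (a-1) * ((1+v : ℝ):ℂ) ^ (-(a+b))
      = 2 * ∫ u in Ioi (0:ℝ), (u:ℂ) ^ (2*a-1) * ((1+u^2 : ℝ):ℂ) ^ (-(a+b)) := by
  set g : ℝ → ℂ := fun v => (v:ℂ) ^ (a-1) * ((1+v : ℝ):ℂ) ^ (-(a+b)) with hgdef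
  have hptw : ∀ u ∈ Ioi (0:ℝ), |2*u| • g (u^2)
      = 2 * ((u:ℂ) ^ (2*a-1) * ((1+u^2 : ℝ):ℂ) ^ (-(a+b))) := fun u hu =>
    sq_pointwise (mem_Ioi.mp hu)
  have htrans := integrableOn_image_iff_integrableOn_abs_deriv_smul measurableSet_Ioi
    sq_deriv sq_inj g
  rw [sq_image] at htrans
  constructor
  · rw [htrans]
    constructor
    · intro h
      have h2 := (h.congr_fun hptw measurableSet_Ioi).const_mul (2:ℂ)⁻¹
      refine IntegrableOn.congr_fun h2 (fun u hu => ?_) measurableSet_Ioi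
      field_simp
    · intro h
      exact IntegrableOn.congr_fun (h.const_mul 2) (fun u hu => (hptw u hu).symm)
        measurableSet_Ioi
  · have h2 := integral_image_eq_integral_abs_deriv_smul measurableSet_Ioi sq_deriv sq_inj g
    rw [sq_image] at h2
    rw [h2, setIntegral_congr_fun measurableSet_Ioi hptw, integral_const_mul]

lemma exp_image : Real.exp '' (Ioi 0) = Ioi 1 := by
  ext x
  constructor
  · rintro ⟨t, ht, rfl⟩
    rw [mem_Ioi] at ht ⊢
    exact Real.one_lt_exp_iff.mpr ht
  · intro hx
    rw [mem_Ioi] at hx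
    exact ⟨Real.log x, by rw [mem_Ioi]; exact Real.log_pos hx, Real.exp_log (by linarith)⟩

lemma exp_deriv' : ∀ t ∈ Ioi (0:ℝ), HasDerivWithinAt Real.exp (Real.exp t) (Ioi 0) t :=
  fun t _ => (Real.hasDerivAt_exp t).hasDerivWithinAt

lemma exp_inj : InjOn Real.exp (Ioi 0) := Real.exp_injective.injOn

lemma exp_neg_image : (fun t : ℝ => Real.exp (-t)) '' (Ioi 0) = Ioo 0 1 := by
  ext x
  constructor
  · rintro ⟨t, ht, rfl⟩
    rw [mem_Ioi] at ht
    exact ⟨Real.exp_pos _, Real.exp_lt_one_iff.mpr (by linarith)⟩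
  · rintro ⟨h0, h1⟩
    refine ⟨-Real.log x, by rw [mem_Ioi]; simpa using Real.log_neg h0 h1, ?_⟩
    dsimp only
    rw [neg_neg, Real.exp_log h0]

lemma exp_neg_deriv' : ∀ t ∈ Ioi (0:ℝ),
    HasDerivWithinAt (fun t : ℝ => Real.exp (-t)) (-Real.exp (-t)) (Ioi 0) t := by
  intro t _
  have h : HasDerivAt (fun t : ℝ => -t) (-1) t := (hasDerivAt_id t).neg
  have := h.exp
  rw [mul_neg_one] at this
  exact this.hasDerivWithinAt

lemma exp_neg_inj : InjOn (fun t : ℝ => Real.exp (-t)) (Ioi 0) := by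
  intro x _ y _ h
  dsimp at h
  have := Real.exp_injective h
  linarith

lemma cpow_exp_real (t : ℝ) (w : ℂ) :
    ((Real.exp t : ℝ) : ℂ) ^ w = Complex.exp (t * w) := by
  rw [Complex.cpow_def_of_ne_zero (ofReal_ne_zero_of_pos (Real.exp_pos t))]
  congr 1
  rw [← Complex.ofReal_log (Real.exp_pos t).le, Real.log_exp]

lemma besselK_eq (μ : ℂ) {y : ℝ} (hy : 0 < y)
    (hint : IntegrableOn
      (fun u : ℝ => Complex.exp (-((π*(u+u⁻¹) : ℝ) * (y:ℝ) : ℝ)) * (u:ℂ)^(μ-1)) (Ioi 0)) :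
    besselK μ (2*π*y)
      = (1/2) * ∫ u in Ioi (0:ℝ),
          Complex.exp (-((π*(u+u⁻¹) : ℝ) * (y:ℝ) : ℝ)) * (u:ℂ)^(μ-1) := by
  set f : ℝ → ℂ := fun u => Complex.exp (-((π*(u+u⁻¹) : ℝ) * (y:ℝ) : ℝ)) * (u:ℂ)^(μ-1)
    with hfdef
  -- pointwise identities
  have harg : ∀ t : ℝ, 0 < t →
      (-((π*(Real.exp t + (Real.exp t)⁻¹) : ℝ) * (y:ℝ) : ℝ) : ℂ)
        = -((2*π*y : ℝ) : ℂ) * (Real.cosh t : ℝ) := by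
    intro t _
    have h1 : Real.exp t + (Real.exp t)⁻¹ = 2 * Real.cosh t := by
      rw [Real.cosh_eq, Real.exp_neg]; ring
    push_cast [h1]
    ring
  have harg' : ∀ t : ℝ, 0 < t →
      (-((π*(Real.exp (-t) + (Real.exp (-t))⁻¹) : ℝ) * (y:ℝ) : ℝ) : ℂ)
        = -((2*π*y : ℝ) : ℂ) * (Real.cosh t : ℝ) := by
    intro t ht
    have h1 : Real.exp (-t) + (Real.exp (-t))⁻¹ = 2 * Real.cosh t := by
      rw [Real.cosh_eq, Real.exp_neg, inv_inv]; ring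
    push_cast [h1]
    ring
  have hp1 : ∀ t ∈ Ioi (0:ℝ), |Real.exp t| • f (Real.exp t)
      = Complex.exp (-((2*π*y : ℝ) : ℂ) * (Real.cosh t : ℝ)) * Complex.exp (μ * t) := by
    intro t ht
    rw [mem_Ioi] at ht
    rw [hfdef]
    dsimp only
    rw [abs_of_pos (Real.exp_pos t), cpow_exp_real, Complex.real_smul, harg t ht,
      Complex.ofReal_exp, show ((t:ℂ) * (μ - 1)) = μ * t - t from by ring,
      Complex.exp_sub]
    have : Complex.exp (t:ℂ) ≠ 0 := Complex.exp_ne_zero _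
    field_simp
    try ring
  have hp2 : ∀ t ∈ Ioi (0:ℝ), |-Real.exp (-t)| • f (Real.exp (-t))
      = Complex.exp (-((2*π*y : ℝ) : ℂ) * (Real.cosh t : ℝ)) * Complex.exp (-(μ * t)) := by
    intro t ht
    rw [mem_Ioi] at ht
    rw [hfdef]
    dsimp only
    rw [abs_neg, abs_of_pos (Real.exp_pos (-t)), cpow_exp_real, Complex.real_smul,
      harg' t ht, Complex.ofReal_exp,
      show (((-t : ℝ):ℂ) * (μ - 1)) = -(μ*t) + t from by push_cast; ring,
      Complex.exp_add, Complex.ofReal_neg, Complex.exp_neg]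
    have : Complex.exp (t:ℂ) ≠ 0 := Complex.exp_ne_zero _
    field_simp
    try ring
  -- transfer integrals
  have ht1 := integral_image_eq_integral_abs_deriv_smul measurableSet_Ioi exp_deriv' exp_inj f
  rw [exp_image] at ht1
  have ht2 := integral_image_eq_integral_abs_deriv_smul measurableSet_Ioi exp_neg_deriv'
    exp_neg_inj f
  rw [exp_neg_image] at ht2
  have hti1 := integrableOn_image_iff_integrableOn_abs_deriv_smul measurableSet_Ioi
    exp_deriv' exp_inj f
  rw [exp_image] at hti1
  have hti2 := integrableOn_image_iff_integrableOn_abs_deriv_smul measurableSet_Ioi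
    exp_neg_deriv' exp_neg_inj f
  rw [exp_neg_image] at hti2
  have hi1 : IntegrableOn (fun t => Complex.exp (-((2*π*y : ℝ) : ℂ) * (Real.cosh t : ℝ))
      * Complex.exp (μ * t)) (Ioi 0) := by
    have := hti1.mp (hint.mono_set (Ioi_subset_Ioi zero_le_one))
    exact (this.congr_fun hp1 measurableSet_Ioi)
  have hi2 : IntegrableOn (fun t => Complex.exp (-((2*π*y : ℝ) : ℂ) * (Real.cosh t : ℝ))
      * Complex.exp (-(μ * t))) (Ioi 0) := by
    have := hti2.mp (hint.mono_set Ioo_subset_Ioi_self)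
    exact (this.congr_fun hp2 measurableSet_Ioi)
  -- split the domain
  have hset : Ioo (0:ℝ) 1 ∪ Ioi 1 = Ioi 0 \ {1} := by
    ext x
    simp only [mem_union, mem_Ioo, mem_Ioi, mem_diff, mem_singleton_iff]
    constructor
    · rintro (⟨h0, h1⟩ | h1)
      · exact ⟨h0, ne_of_lt h1⟩
      · exact ⟨by linarith, ne_of_gt h1⟩
    · rintro ⟨h0, hne⟩
      rcases lt_trichotomy x 1 with h | h | h
      · exact Or.inl ⟨h0, h⟩
      · exact absurd h hne
      · exact Or.inr h
  have hae : (Ioo (0:ℝ) 1 ∪ Ioi 1 : Set ℝ) =ᵐ[volume] Ioi 0 := by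
    rw [hset]
    exact diff_ae_eq_self.mpr (measure_mono_null inter_subset_right (measure_singleton 1))
  have hsplit : ∫ u in Ioi (0:ℝ), f u
      = (∫ u in Ioo (0:ℝ) 1, f u) + ∫ u in Ioi (1:ℝ), f u := by
    rw [← setIntegral_congr_set hae]
    exact setIntegral_union (by
        rw [disjoint_left]
        rintro x ⟨_, hx1⟩ hx2
        rw [mem_Ioi] at hx2
        linarith) measurableSet_Ioi (hint.mono_set Ioo_subset_Ioi_self)
      (hint.mono_set (Ioi_subset_Ioi zero_le_one))
  rw [hsplit, ht1, ht2, setIntegral_congr_fun measurableSet_Ioi hp1,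
    setIntegral_congr_fun measurableSet_Ioi hp2, ← integral_add hi2 hi1]
  rw [besselK]
  rw [← integral_const_mul]
  refine setIntegral_congr_fun measurableSet_Ioi (fun t ht => ?_)
  rw [Complex.cosh]
  push_cast
  ring

lemma gamma_int {q c : ℝ} (hq : -1 < q) (hc : 0 < c) :
    IntegrableOn (fun x : ℝ => x ^ q * Real.exp (-(c * x))) (Ioi 0) := by
  have h := integrableOn_rpow_mul_exp_neg_mul_rpow hq one_pos hc
  refine h.congr_fun (fun x hx => ?_) measurableSet_Ioi
  dsimp only
  rw [Real.rpow_one, neg_mul]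

/-- For `Re s > |Re μ|`, the Mellin transform `∫₀^∞ K_μ(2πy) y^{s−1} dy` converges
absolutely and equals `(1/4)·π^{−s}·Γ((s+μ)/2)·Γ((s−μ)/2)`. -/
theorem besselK_mellin (μ s : ℂ) (hs : s.re > |μ.re|) :
    IntegrableOn (fun y : ℝ => besselK μ (2 * π * y) * (y : ℂ) ^ (s - 1)) (Ioi 0) ∧
    ∫ y in Ioi (0 : ℝ), besselK μ (2 * π * y) * (y : ℂ) ^ (s - 1)
      = (1 / 4) * (π : ℂ) ^ (-s) * Complex.Gamma ((s + μ) / 2)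
        * Complex.Gamma ((s - μ) / 2) := by
  have hσ : 0 < s.re := lt_of_le_of_lt (abs_nonneg _) hs
  have hρ1 : -s.re < μ.re := neg_lt_of_abs_lt hs
  have hρ2 : μ.re < s.re := lt_of_abs_lt hs
  set a : ℂ := (s + μ) / 2 with hadef
  set b : ℂ := (s - μ) / 2 with hbdef
  have hre2 : ∀ z : ℂ, (z / 2).re = z.re / 2 := by
    intro z
    rw [show (2:ℂ) = ((2:ℝ):ℂ) from by norm_num, Complex.div_ofReal_re]
  have ha : 0 < a.re := by rw [hadef, hre2, Complex.add_re]; linarith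
  have hb : 0 < b.re := by rw [hbdef, hre2, Complex.sub_re]; linarith
  have hab : a + b = s := by rw [hadef, hbdef]; ring
  set ν : Measure ℝ := volume.restrict (Ioi 0) with hν
  set G : ℝ → ℝ → ℂ := fun y u => (y:ℂ)^(s-1) *
    (Complex.exp (-((π*(u+u⁻¹) : ℝ) * (y:ℝ) : ℝ)) * (u:ℂ)^(μ-1)) with hGdef
  -- measurability
  have hmeas : AEStronglyMeasurable (Function.uncurry G) (ν.prod ν) := by
    apply Measurable.aestronglyMeasurable
    apply Measurable.mul
    · exact (Complex.measurable_ofReal.comp measurable_fst).pow measurable_const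
    · apply Measurable.mul
      · apply Complex.measurable_exp.comp
        apply Measurable.neg
        apply Complex.measurable_ofReal.comp
        exact (((measurable_snd.add measurable_snd.inv).const_mul π).mul measurable_fst)
      · exact (Complex.measurable_ofReal.comp measurable_snd).pow measurable_const
  -- norm of G
  have hnorm : ∀ y u : ℝ, 0 < y → 0 < u →
      ‖G y u‖ = y^(s.re-1) * (Real.exp (-(π*(u+u⁻¹)*y)) * u^(μ.re-1)) := by
    intro y u hy hu
    simp only [hGdef]
    rw [norm_mul, norm_mul, Complex.norm_cpow_eq_rpow_re_of_pos hy,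
      Complex.norm_cpow_eq_rpow_re_of_pos hu, Complex.norm_exp]
    simp [Complex.sub_re, Complex.one_re]
  -- integrability of y-slices
  have hslice : ∀ u : ℝ, 0 < u → Integrable (fun y => G y u) ν := by
    intro u hu
    have hr : 0 < π*(u+u⁻¹) := by positivity
    have hint : IntegrableOn
        (fun y : ℝ => y^(s.re-1) * Real.exp (-(π*(u+u⁻¹)*y)) * u^(μ.re-1)) (Ioi 0) :=
      (gamma_int (by linarith) hr).mul_const _
    refine Integrable.mono' hint ?_ ?_
    · apply Measurable.aestronglyMeasurable
      apply Measurable.mul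
      · exact Complex.measurable_ofReal.pow measurable_const
      · apply Measurable.mul
        · apply Complex.measurable_exp.comp
          apply Measurable.neg
          apply Complex.measurable_ofReal.comp
          exact measurable_id.const_mul _
        · exact measurable_const
    · rw [hν, ae_restrict_iff' measurableSet_Ioi]
      refine Filter.Eventually.of_forall (fun y hy => ?_)
      rw [mem_Ioi] at hy
      rw [hnorm y u hy hu]
      exact le_of_eq (mul_assoc _ _ _).symm
  -- value of the norm integral
  have hnormint : ∀ u : ℝ, 0 < u → ∫ y, ‖G y u‖ ∂ν
      = u^(μ.re-1) * ((1/(π*(u+u⁻¹)))^s.re * Real.Gamma s.re) := by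
    intro u hu
    have hr : 0 < π*(u+u⁻¹) := by positivity
    have h1 : ∫ y, ‖G y u‖ ∂ν
        = ∫ y in Ioi (0:ℝ), y^(s.re-1) * Real.exp (-(π*(u+u⁻¹)*y)) * u^(μ.re-1) := by
      rw [hν]
      refine setIntegral_congr_fun measurableSet_Ioi (fun y hy => ?_)
      rw [hnorm y u (mem_Ioi.mp hy) hu]
      ring
    rw [h1, integral_mul_const, integral_rpow_mul_exp_neg_mul_Ioi hσ hr]
    ring
  -- integrability of the norm integral
  have hH : Integrable (fun u => ∫ y, ‖G y u‖ ∂ν) ν := by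
    set a' : ℂ := (((s.re + μ.re)/2 : ℝ) : ℂ) with ha'def
    set b' : ℂ := (((s.re - μ.re)/2 : ℝ) : ℂ) with hb'def
    have ha' : 0 < a'.re := by rw [ha'def, Complex.ofReal_re]; linarith
    have hb' : 0 < b'.re := by rw [hb'def, Complex.ofReal_re]; linarith
    have hc : IntegrableOn
        (fun u : ℝ => (u:ℂ) ^ (2*a'-1) * ((1+u^2 : ℝ):ℂ) ^ (-(a'+b'))) (Ioi 0) :=
      (sqIoi a' b').1.mp (betaIoi ha' hb').1
    have hcn := hc.norm
    have hptw : ∀ u ∈ Ioi (0:ℝ),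
        (Real.Gamma s.re * π ^ (-s.re)) • ‖(u:ℂ) ^ (2*a'-1) * ((1+u^2 : ℝ):ℂ) ^ (-(a'+b'))‖
          = ∫ y, ‖G y u‖ ∂ν := by
      intro u hu
      rw [mem_Ioi] at hu
      have h2 : (0:ℝ) < 1 + u^2 := by positivity
      rw [norm_mul, Complex.norm_cpow_eq_rpow_re_of_pos hu,
        Complex.norm_cpow_eq_rpow_re_of_pos h2, hnormint u hu]
      have hre1 : (2*a'-1).re = s.re + μ.re - 1 := by
        rw [ha'def]
        simp [Complex.sub_re, Complex.mul_re]
        ring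
      have hre2' : (-(a'+b')).re = -s.re := by
        rw [ha'def, hb'def]
        simp [Complex.add_re, Complex.neg_re]
        ring
      rw [hre1, hre2']
      have hfact : (1/(π*(u+u⁻¹))) = π⁻¹ * ((1+u^2)⁻¹ * u) := by
        rw [one_div, mul_inv]
        congr 1
        rw [show u + u⁻¹ = (1+u^2) * u⁻¹ from by field_simp; ring, mul_inv, inv_inv]
      rw [hfact, Real.mul_rpow (by positivity) (by positivity),
        Real.mul_rpow (by positivity) hu.le,
        Real.inv_rpow Real.pi_pos.le, Real.inv_rpow h2.le,
        ← Real.rpow_neg Real.pi_pos.le, ← Real.rpow_neg h2.le,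
        show s.re + μ.re - 1 = s.re + (μ.re - 1) from by ring,
        Real.rpow_add hu]
      rw [smul_eq_mul]
      ring
    refine Integrable.congr (hcn.smul (Real.Gamma s.re * π ^ (-s.re))) ?_
    rw [hν, Filter.EventuallyEq, ae_restrict_iff' measurableSet_Ioi]
    exact Filter.Eventually.of_forall (fun u hu => hptw u hu)
  -- product integrability
  have hF : Integrable (Function.uncurry G) (ν.prod ν) := by
    refine (integrable_prod_iff' hmeas).mpr ⟨?_, hH⟩
    filter_upwards [ae_restrict_mem measurableSet_Ioi] with u hu
    exact hslice u (mem_Ioi.mp hu)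
  -- pointwise identity a.e.
  have hae : ∀ᵐ y ∂ν, besselK μ (2*π*y) * (y:ℂ)^(s-1)
      = (1/2) * ∫ u in Ioi (0:ℝ), G y u := by
    filter_upwards [hF.prod_right_ae, ae_restrict_mem measurableSet_Ioi] with y hy1 hy2
    rw [mem_Ioi] at hy2
    have hy0 : ((y:ℂ)^(s-1)) ≠ 0 := by
      simp [Complex.cpow_eq_zero_iff, ofReal_ne_zero_of_pos hy2]
    have hfy : IntegrableOn
        (fun u : ℝ => Complex.exp (-((π*(u+u⁻¹) : ℝ) * (y:ℝ) : ℝ)) * (u:ℂ)^(μ-1))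
        (Ioi 0) := by
      have h2 := hy1.const_mul (((y:ℂ)^(s-1))⁻¹)
      refine IntegrableOn.congr_fun h2 (fun u hu => ?_) measurableSet_Ioi
      simp only [Function.uncurry, hGdef]
      rw [← mul_assoc, inv_mul_cancel₀ hy0, one_mul]
    rw [besselK_eq μ hy2 hfy]
    have h3 : ∫ u in Ioi (0:ℝ), G y u
        = (y:ℂ)^(s-1) * ∫ u in Ioi (0:ℝ),
            Complex.exp (-((π*(u+u⁻¹) : ℝ) * (y:ℝ) : ℝ)) * (u:ℂ)^(μ-1) := by
      rw [hGdef, ← integral_const_mul]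
    rw [h3]
    ring
  -- inner integral evaluation
  have hinner : ∀ u ∈ Ioi (0:ℝ), ∫ y in Ioi (0:ℝ), G y u
      = Complex.Gamma s * (π:ℂ)^(-s) * ((u:ℂ)^(2*a-1) * ((1+u^2 : ℝ):ℂ)^(-(a+b))) := by
    intro u hu
    rw [mem_Ioi] at hu
    have hu0 : (u:ℂ) ≠ 0 := ofReal_ne_zero_of_pos hu
    have h2 : (0:ℝ) < 1 + u^2 := by positivity
    have hr : 0 < π*(u+u⁻¹) := by positivity
    have h1 : ∀ y ∈ Ioi (0:ℝ), G y u
        = ((y:ℂ)^(s-1) * Complex.exp (-(((π*(u+u⁻¹) : ℝ) : ℂ) * (y:ℂ)))) * (u:ℂ)^(μ-1) := by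
      intro y _
      simp only [hGdef]
      rw [show (-(((π*(u+u⁻¹) : ℝ)) * y : ℝ) : ℂ) = -(((π*(u+u⁻¹) : ℝ) : ℂ) * (y:ℂ)) from by
        push_cast; ring]
      ring
    rw [setIntegral_congr_fun measurableSet_Ioi h1, integral_mul_const,
      Complex.integral_cpow_mul_exp_neg_mul_Ioi hσ hr]
    have e0 : (1 / ((π*(u+u⁻¹) : ℝ) : ℂ)) ^ s
        = (((π⁻¹ * ((1+u^2)⁻¹ * u) : ℝ)) : ℂ) ^ s := by
      congr 1
      rw [one_div, ← Complex.ofReal_inv]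
      congr 1
      rw [mul_inv]
      congr 1
      rw [show u + u⁻¹ = (1+u^2) * u⁻¹ from by field_simp; ring, mul_inv, inv_inv]
    rw [e0, Complex.ofReal_mul, Complex.mul_cpow_ofReal_nonneg (by positivity) (by positivity),
      Complex.ofReal_mul, Complex.mul_cpow_ofReal_nonneg (by positivity) hu.le,
      inv_cpow_ofReal Real.pi_pos, inv_cpow_ofReal h2, ← Complex.cpow_neg, ← Complex.cpow_neg]
    rw [show (2*a-1 : ℂ) = s + (μ-1) from by rw [hadef]; ring, hab,
      Complex.cpow_add _ _ hu0]
    ring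
  constructor
  · have h1 : Integrable (fun y => ∫ u, Function.uncurry G (y, u) ∂ν) ν :=
      hF.integral_prod_left
    exact ((h1.const_mul (1/2 : ℂ)).congr (hae.mono fun y h => h.symm))
  · calc ∫ y in Ioi (0:ℝ), besselK μ (2*π*y) * (y:ℂ)^(s-1)
        = ∫ y in Ioi (0:ℝ), (1/2 : ℂ) * ∫ u in Ioi (0:ℝ), G y u := integral_congr_ae hae
      _ = (1/2 : ℂ) * ∫ y in Ioi (0:ℝ), ∫ u in Ioi (0:ℝ), G y u := integral_const_mul _ _
      _ = (1/2 : ℂ) * ∫ u in Ioi (0:ℝ), ∫ y in Ioi (0:ℝ), G y u := by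
          rw [integral_integral_swap hF]
      _ = (1/2 : ℂ) * ∫ u in Ioi (0:ℝ), Complex.Gamma s * (π:ℂ)^(-s) *
            ((u:ℂ)^(2*a-1) * ((1+u^2 : ℝ):ℂ)^(-(a+b))) := by
          rw [setIntegral_congr_fun measurableSet_Ioi hinner]
      _ = (1/2 : ℂ) * (Complex.Gamma s * (π:ℂ)^(-s) *
            ∫ u in Ioi (0:ℝ), (u:ℂ)^(2*a-1) * ((1+u^2 : ℝ):ℂ)^(-(a+b))) := by
          rw [integral_const_mul]
      _ = (1 / 4) * (π : ℂ) ^ (-s) * Complex.Gamma a * Complex.Gamma b := by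
          have hsq := (sqIoi a b).2
          have hbeta := (betaIoi ha hb).2
          have hΓ := Complex.Gamma_mul_Gamma_eq_betaIntegral ha hb
          rw [hbeta] at hsq
          rw [hab] at hΓ
          rw [show (∫ u in Ioi (0:ℝ), (u:ℂ)^(2*a-1) * ((1+u^2 : ℝ):ℂ)^(-(a+b)))
              = (1/2 : ℂ) * Complex.betaIntegral a b from by
            rw [hsq]; ring]
          linear_combination (-(1:ℂ)/4 * (π:ℂ)^(-s)) * hΓ
end betaIoi
end

section
/- If μ ∈ ℂ with Re μ = 0 and 0 < x₀ ≤ x, then |K_μ(x)| ≤ e^{−(x−x₀)}·K₀(x₀); in particular K_μ(x) → 0 exponentially fast as x → ∞. -/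
open MeasureTheory Real Set Filter

lemma integrable_exp_cosh {c : ℝ} (hc : 0 < c) :
    IntegrableOn (fun t => Real.exp (-(c * Real.cosh t))) (Ioi 0) := by
  apply (exp_neg_integrableOn_Ioi 0 hc).mono'
    ((Real.measurable_exp.comp ((measurable_const.mul Real.measurable_cosh).neg)).aestronglyMeasurable)
  filter_upwards [ae_restrict_mem measurableSet_Ioi] with t ht
  show ‖Real.exp (-(c * Real.cosh t))‖ ≤ Real.exp (-c * t)
  rw [Real.norm_eq_abs, abs_of_pos (Real.exp_pos _), Real.exp_le_exp, neg_mul, neg_le_neg_iff]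
  have h1 : t ≤ Real.sinh t := Real.self_le_sinh_iff.2 (le_of_lt ht)
  nlinarith [Real.sinh_lt_cosh t, hc]

lemma besselK_zero_re {c : ℝ} (hc : 0 < c) :
    (besselK 0 c).re = ∫ t in Ioi (0 : ℝ), Real.exp (-(c * Real.cosh t)) := by
  unfold besselK
  simp only [zero_mul, Complex.cosh_zero, mul_one]
  have : ∀ t : ℝ, Complex.exp (-(c : ℂ) * Real.cosh t) = ((Real.exp (-(c * Real.cosh t)) : ℝ) : ℂ) := by
    intro t
    rw [show -(c : ℂ) * (Real.cosh t : ℂ) = ((-(c * Real.cosh t) : ℝ) : ℂ) by push_cast; ring,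
      ← Complex.ofReal_exp]
  simp only [this]
  rw [show (∫ t in Ioi (0:ℝ), ((Real.exp (-(c * Real.cosh t)) : ℝ) : ℂ))
      = ((∫ t in Ioi (0:ℝ), Real.exp (-(c * Real.cosh t)) : ℝ) : ℂ) from integral_ofReal,
    Complex.ofReal_re]

lemma besselK_bound (μ : ℂ) (hμ : μ.re = 0) {x₀ x : ℝ} (h0 : 0 < x₀) (hx : x₀ ≤ x) :
    ‖besselK μ x‖ ≤ Real.exp (-(x - x₀)) * (besselK 0 x₀).re := by
  rw [besselK_zero_re h0]
  calc ‖besselK μ x‖ ≤ ∫ t in Ioi (0:ℝ),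
      ‖Complex.exp (-(x : ℂ) * Real.cosh t) * Complex.cosh (μ * t)‖ :=
        norm_integral_le_integral_norm _
    _ ≤ ∫ t in Ioi (0:ℝ), Real.exp (-(x - x₀)) * Real.exp (-(x₀ * Real.cosh t)) := by
        apply integral_mono_of_nonneg
        · filter_upwards with t; positivity
        · exact ((integrable_exp_cosh h0).const_mul _)
        · filter_upwards [ae_restrict_mem measurableSet_Ioi] with t ht
          have hco : Complex.cosh (μ * t) = (Real.cos (μ.im * t) : ℂ) := by
            have : μ * t = ((μ.im * t : ℝ) : ℂ) * Complex.I := by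
              rw [Complex.ext_iff]; simp [hμ]
            rw [this, Complex.cosh_mul_I, ← Complex.ofReal_cos]
          have h1 : ‖Complex.cosh (μ * t)‖ ≤ 1 := by
            rw [hco, Complex.norm_real, Real.norm_eq_abs]
            exact Real.abs_cos_le_one _
          have h2 : ‖Complex.exp (-(x : ℂ) * Real.cosh t)‖ = Real.exp (-(x * Real.cosh t)) := by
            rw [Complex.norm_exp]
            norm_num
          rw [norm_mul, h2]
          calc Real.exp (-(x * Real.cosh t)) * ‖Complex.cosh (μ * t)‖
              ≤ Real.exp (-(x * Real.cosh t)) * 1 := by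
                exact mul_le_mul_of_nonneg_left h1 (Real.exp_pos _).le
            _ = Real.exp (-((x - x₀) * Real.cosh t)) * Real.exp (-(x₀ * Real.cosh t)) := by
                rw [mul_one, ← Real.exp_add]; ring_nf
            _ ≤ Real.exp (-(x - x₀)) * Real.exp (-(x₀ * Real.cosh t)) := by
                apply mul_le_mul_of_nonneg_right _ (Real.exp_pos _).le
                apply Real.exp_le_exp.2
                rw [neg_le_neg_iff]
                nlinarith [Real.one_le_cosh t, sub_nonneg.2 hx]
    _ = Real.exp (-(x - x₀)) * ∫ t in Ioi (0:ℝ), Real.exp (-(x₀ * Real.cosh t)) :=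
        integral_const_mul _ _

/-- For purely imaginary `μ` and `0 < x₀ ≤ x`, `|K_μ(x)| ≤ e^{−(x−x₀)}·K₀(x₀)`;
in particular `K_μ(x) → 0` (exponentially fast) as `x → ∞`. -/
theorem besselK_decay (μ : ℂ) (hμ : μ.re = 0) :
    (∀ x₀ x : ℝ, 0 < x₀ → x₀ ≤ x →
      ‖besselK μ x‖ ≤ Real.exp (-(x - x₀)) * (besselK 0 x₀).re) ∧
    Tendsto (fun x : ℝ => besselK μ x) atTop (nhds 0) := by
  refine ⟨fun x₀ x h0 hx => besselK_bound μ hμ h0 hx, ?_⟩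
  have hb : ∀ᶠ x : ℝ in atTop, ‖besselK μ x‖ ≤ Real.exp (-(x - 1)) * (besselK 0 1).re := by
    filter_upwards [eventually_ge_atTop (1:ℝ)] with x hx
    exact besselK_bound μ hμ one_pos hx
  have hg : Tendsto (fun x : ℝ => Real.exp (-(x - 1)) * (besselK 0 1).re) atTop (nhds 0) := by
    rw [show (0:ℝ) = 0 * (besselK 0 1).re by ring]
    apply Tendsto.mul_const
    exact Real.tendsto_exp_atBot.comp
      (tendsto_neg_atBot_iff.2 (tendsto_atTop_add_const_right _ _ tendsto_id))
  exact squeeze_zero_norm' hb hg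
end

section
/- Let α, β, γ ∈ ℂ with α + β + γ = 0 and Re α = Re β = Re γ = 0. Then for all y₁, y₂ > 0, Jacquet's Whittaker function satisfies the symmetry W(y₂,y₁) = conj(W(y₁,y₂)), where conj denotes complex conjugation. -/
open MeasureTheory Real Set

/-- Jacquet's Whittaker function for `SL(3,ℤ)`, defined for `y₁, y₂ > 0` by Stade's formula
`W(y₁,y₂) = 16·(πy₁)^{1−γ/2}·(πy₂)^{1+γ/2} ∫₀^∞ K_{(α−β)/2}(2πy₁√(1+u))·
K_{(α−β)/2}(2πy₂√(1+1/u))·u^{−3γ/4−1} du`. -/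
noncomputable def jacquetW (α β γ : ℂ) (y₁ y₂ : ℝ) : ℂ :=
  16 * ((π * y₁ : ℝ) : ℂ) ^ (1 - γ / 2) * ((π * y₂ : ℝ) : ℂ) ^ (1 + γ / 2) *
    ∫ u in Ioi (0 : ℝ),
      besselK ((α - β) / 2) (2 * π * y₁ * Real.sqrt (1 + u))
        * besselK ((α - β) / 2) (2 * π * y₂ * Real.sqrt (1 + u⁻¹))
        * (u : ℂ) ^ (-(3 * γ) / 4 - 1)

lemma besselK_conj (μ : ℂ) (x : ℝ) :
    starRingEnd ℂ (besselK μ x) = besselK (starRingEnd ℂ μ) x := by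
  unfold besselK
  rw [← integral_conj]
  congr 1
  funext t
  simp only [map_mul, ← Complex.exp_conj, ← Complex.cosh_conj, map_neg, Complex.conj_ofReal,
    neg_mul]

lemma besselK_neg (μ : ℂ) (x : ℝ) : besselK (-μ) x = besselK μ x := by
  unfold besselK
  congr 1
  funext t
  rw [show -μ * (t : ℂ) = -(μ * t) from neg_mul μ t, Complex.cosh_neg]

lemma conj_eq_neg_of_re_eq_zero {z : ℂ} (h : z.re = 0) : starRingEnd ℂ z = -z :=
  Complex.ext (by simp [h]) (by simp)

lemma conj_real_cpow {x : ℝ} (hx : 0 < x) (s : ℂ) :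
    starRingEnd ℂ ((x : ℂ) ^ s) = (x : ℂ) ^ (starRingEnd ℂ s) := by
  have harg : (x : ℂ).arg ≠ π := by
    rw [Complex.arg_ofReal_of_nonneg hx.le]
    exact Real.pi_ne_zero.symm
  have h := Complex.conj_cpow (x : ℂ) s harg
  rw [Complex.conj_ofReal] at h
  rw [h, Complex.conj_conj]

/-- Symmetry of Jacquet's Whittaker function: `W(y₂,y₁) = conj(W(y₁,y₂))`. -/
theorem jacquetW_symm (α β γ : ℂ) (hsum : α + β + γ = 0)
    (hα : α.re = 0) (hβ : β.re = 0) (hγ : γ.re = 0)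
    (y₁ y₂ : ℝ) (hy₁ : 0 < y₁) (hy₂ : 0 < y₂) :
    jacquetW α β γ y₂ y₁ = starRingEnd ℂ (jacquetW α β γ y₁ y₂) := by
  have hπ := Real.pi_pos
  have hγc : starRingEnd ℂ γ = -γ := conj_eq_neg_of_re_eq_zero hγ
  have hμc : starRingEnd ℂ ((α - β) / 2) = -((α - β) / 2) := by
    rw [map_div₀, map_sub, conj_eq_neg_of_re_eq_zero hα, conj_eq_neg_of_re_eq_zero hβ,
      map_ofNat]
    ring
  unfold jacquetW
  rw [map_mul, map_mul, map_mul, map_ofNat,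
    conj_real_cpow (by positivity) (1 - γ / 2), conj_real_cpow (by positivity) (1 + γ / 2)]
  have he1 : starRingEnd ℂ (1 - γ / 2) = 1 + γ / 2 := by
    rw [map_sub, map_div₀, map_one, map_ofNat, hγc]; ring
  have he2 : starRingEnd ℂ (1 + γ / 2) = 1 - γ / 2 := by
    rw [map_add, map_div₀, map_one, map_ofNat, hγc]; ring
  rw [he1, he2]
  have hI : (starRingEnd ℂ) (∫ u in Ioi (0 : ℝ),
      besselK ((α - β) / 2) (2 * π * y₁ * Real.sqrt (1 + u))
        * besselK ((α - β) / 2) (2 * π * y₂ * Real.sqrt (1 + u⁻¹))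
        * (u : ℂ) ^ (-(3 * γ) / 4 - 1)) =
      ∫ u in Ioi (0 : ℝ),
      besselK ((α - β) / 2) (2 * π * y₁ * Real.sqrt (1 + u))
        * besselK ((α - β) / 2) (2 * π * y₂ * Real.sqrt (1 + u⁻¹))
        * (u : ℂ) ^ (3 * γ / 4 - 1) := by
    rw [← integral_conj]
    apply setIntegral_congr_fun measurableSet_Ioi
    intro u hu
    simp only
    rw [map_mul, map_mul, besselK_conj, besselK_conj, hμc, besselK_neg, besselK_neg,
      conj_real_cpow hu]
    congr 1
    rw [map_sub, map_div₀, map_one, map_ofNat, map_neg, map_mul, map_ofNat, hγc]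
    ring
  rw [hI]
  have hsub := MeasureTheory.integral_comp_rpow_Ioi
    (fun x : ℝ => besselK ((α - β) / 2) (2 * π * y₁ * Real.sqrt (1 + x))
      * besselK ((α - β) / 2) (2 * π * y₂ * Real.sqrt (1 + x⁻¹))
      * (x : ℂ) ^ (3 * γ / 4 - 1)) (p := -1) (by norm_num)
  rw [← hsub]
  have hIeq : (∫ u in Ioi (0 : ℝ),
      besselK ((α - β) / 2) (2 * π * y₂ * Real.sqrt (1 + u))
        * besselK ((α - β) / 2) (2 * π * y₁ * Real.sqrt (1 + u⁻¹))
        * (u : ℂ) ^ (-(3 * γ) / 4 - 1)) =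
    ∫ x in Ioi (0 : ℝ), (|(-1 : ℝ)| * x ^ ((-1 : ℝ) - 1)) •
      (besselK ((α - β) / 2) (2 * π * y₁ * Real.sqrt (1 + x ^ (-1 : ℝ)))
        * besselK ((α - β) / 2) (2 * π * y₂ * Real.sqrt (1 + (x ^ (-1 : ℝ))⁻¹))
        * ((x ^ (-1 : ℝ) : ℝ) : ℂ) ^ (3 * γ / 4 - 1)) := by
    apply setIntegral_congr_fun measurableSet_Ioi
    intro x hx
    have hx0 : (0 : ℝ) < x := hx
    have hxne : (x : ℂ) ≠ 0 := Complex.ofReal_ne_zero.mpr hx0.ne'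
    have harg : (x : ℂ).arg ≠ π := by
      rw [Complex.arg_ofReal_of_nonneg hx0.le]
      exact Real.pi_ne_zero.symm
    have h1 : x ^ (-1 : ℝ) = x⁻¹ := by
      rw [Real.rpow_neg_one]
    have h2 : (x⁻¹)⁻¹ = x := inv_inv x
    simp only [h1, h2, abs_neg, abs_one, one_mul]
    rw [Complex.ofReal_inv, Complex.inv_cpow _ _ harg, ← Complex.cpow_neg]
    have h3 : ((x : ℝ) ^ ((-1 : ℝ) - 1) : ℝ) • (besselK ((α - β) / 2) (2 * π * y₁ * Real.sqrt (1 + x⁻¹))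
        * besselK ((α - β) / 2) (2 * π * y₂ * Real.sqrt (1 + x))
        * (x : ℂ) ^ (-(3 * γ / 4 - 1))) =
        ((x : ℂ) ^ ((-2 : ℂ)))
        * (besselK ((α - β) / 2) (2 * π * y₁ * Real.sqrt (1 + x⁻¹))
        * besselK ((α - β) / 2) (2 * π * y₂ * Real.sqrt (1 + x))
        * (x : ℂ) ^ (-(3 * γ / 4 - 1))) := by
      rw [Complex.real_smul, Complex.ofReal_cpow hx0.le]
      norm_num
    rw [h3]
    rw [mul_comm (besselK ((α - β) / 2) (2 * π * y₂ * Real.sqrt (1 + x)))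
      (besselK ((α - β) / 2) (2 * π * y₁ * Real.sqrt (1 + x⁻¹)))]
    rw [show ((x:ℂ) ^ (-(3 * γ) / 4 - 1)) = (x:ℂ) ^ ((-2 : ℂ)) * (x:ℂ) ^ (-(3 * γ / 4 - 1)) by
      rw [← Complex.cpow_add _ _ hxne]; congr 1; ring]
    ring
  rw [hIeq]
  ring
end

section
/- Let g : (0,∞) → ℂ, let y > 0, σ ∈ ℝ and h > 0, and suppose that the function G : ℝ → ℂ defined by G(t) = g(y·e^{2πt})·e^{2πσt} is a Schwartz function. Let Mg(s) = ∫₀^∞ g(u)·u^{s−1} du denote the Mellin transform of g (which converges absolutely for Re s = σ). Then (h/(2π))·Σ_{k∈ℤ} Mg(σ + ikh)·y^{−σ−ikh} = Σ_{k∈ℤ} g(y·e^{2πk/h})·e^{2πkσ/h}, both series converging absolutely. In particular, the discretization error of the trapezoid-rule approximation (h/(2π))·Σ_{k∈ℤ} Mg(σ+ikh)·y^{−σ−ikh} to the inverse Mellin integral g(y) equals Σ_{k≠0} g(y·e^{2πk/h})·e^{2πkσ/h}. -/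
open MeasureTheory Real Set

/-- The Mellin transform `Mg(s) = ∫₀^∞ g(u)·u^{s−1} du`. -/
noncomputable def mellinT (g : ℝ → ℂ) (s : ℂ) : ℂ :=
  ∫ u in Ioi (0 : ℝ), g u * (u : ℂ) ^ (s - 1)

lemma cpow_real_exp (a : ℝ) (s : ℂ) : ((rexp a : ℝ) : ℂ) ^ s = Complex.exp (s * a) := by
  rw [Complex.ofReal_exp, Complex.cpow_def_of_ne_zero (Complex.exp_ne_zero _),
    Complex.log_exp (by simpa using pi_pos) (by simpa using pi_nonneg), mul_comm]

lemma schwartz_int_summable (f : SchwartzMap ℝ ℂ) : Summable fun n : ℤ => ‖f n‖ := by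
  have h := ((f.isBigO_cocompact_rpow (-2)).norm_left.comp_tendsto Int.tendsto_coe_cofinite)
  refine summable_of_isBigO (Real.summable_abs_int_rpow one_lt_two) ?_
  simpa [Real.norm_eq_abs, Function.comp_def] using h

lemma key_mellin (g : ℝ → ℂ) {y σ h : ℝ} (hy : 0 < y) (hh : 0 < h)
    (F : ℝ → ℂ) (hF : ∀ t : ℝ, F t = g (y * rexp (2*π*t/h)) * rexp (2*π*σ*t/h)) (w : ℝ) :
    mellinT g ((σ:ℂ) - Complex.I*w*h) * (y:ℂ) ^ (-((σ:ℂ) - Complex.I*w*h))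
      = (2*π/h : ℂ) * FourierTransform.fourier F w := by
  set s : ℂ := (σ:ℂ) - Complex.I*w*h with hs
  set φ : ℝ → ℝ := fun t => y * rexp (2*π*t/h) with hφ
  have hφpos : ∀ t, 0 < φ t := fun t => by positivity
  have hderiv : ∀ t ∈ (univ : Set ℝ),
      HasDerivWithinAt φ ((2*π/h) * φ t) univ t := by
    intro t _
    have h1 : HasDerivAt (fun t : ℝ => 2*π*t/h) (2*π/h) t := by
      simpa using ((hasDerivAt_id t).const_mul (2*π)).div_const h
    have h2 := (Real.hasDerivAt_exp (2*π*t/h)).comp t h1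
    have h3 := h2.const_mul y
    have e : (2*π/h) * φ t = y * (rexp (2*π*t/h) * (2*π/h)) := by
      change (2*π/h) * (y * rexp (2*π*t/h)) = _; ring
    rw [e]; exact h3.hasDerivWithinAt
  have hinj : InjOn φ univ := by
    intro a _ b _ hab
    have h1 : rexp (2*π*a/h) = rexp (2*π*b/h) := mul_left_cancel₀ hy.ne' hab
    have h2 := Real.exp_injective h1
    have h3 : (2*π/h) * a = (2*π/h) * b := by linear_combination h2
    exact mul_left_cancel₀ (by positivity : (0:ℝ) < 2*π/h).ne' h3
  have himg : φ '' univ = Ioi (0:ℝ) := by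
    rw [image_univ]
    ext u
    constructor
    · rintro ⟨t, rfl⟩; exact hφpos t
    · intro hu
      have hu' : (0:ℝ) < u := hu
      refine ⟨h/(2*π) * Real.log (u/y), ?_⟩
      have harg : 2*π*(h/(2*π) * Real.log (u/y))/h = Real.log (u/y) := by
        field_simp
      simp only [hφ]
      rw [harg, Real.exp_log (by positivity)]
      field_simp
  have step1 : mellinT g s = ∫ t : ℝ, |(2*π/h) * φ t| •
      (g (φ t) * ((φ t : ℝ) : ℂ) ^ (s-1)) := by
    rw [mellinT, ← himg,
      integral_image_eq_integral_abs_deriv_smul MeasurableSet.univ hderiv hinj]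
    rw [setIntegral_univ]
  have point : ∀ t : ℝ, |(2*π/h) * φ t| • (g (φ t) * ((φ t : ℝ) : ℂ) ^ (s-1))
      = (2*π/h : ℂ) * ((y:ℂ)^s * (Complex.exp (↑(-2 * π * (t*w)) * Complex.I) • F t)) := by
    intro t
    have hx : (0:ℝ) < φ t := hφpos t
    have hxne : ((φ t : ℝ) : ℂ) ≠ 0 := by exact_mod_cast hx.ne'
    have e1 : ((φ t : ℝ) : ℂ) ^ (s-1) = ((φ t : ℝ) : ℂ) ^ s / (φ t : ℂ) := by
      rw [Complex.cpow_sub _ _ hxne, Complex.cpow_one]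
    have e2 : ((φ t : ℝ) : ℂ) ^ s = (y:ℂ)^s * Complex.exp (s * (2*π*t/h)) := by
      simp only [hφ]
      rw [show ((y * rexp (2*π*t/h) : ℝ) : ℂ) = (y:ℂ) * ((rexp (2*π*t/h) : ℝ) : ℂ) from by
        push_cast; ring]
      rw [Complex.mul_cpow_ofReal_nonneg hy.le (Real.exp_nonneg _), cpow_real_exp]
      congr 2
      push_cast
      ring
    have e3 : Complex.exp (s * ((2*π*t/h : ℝ) : ℂ))
        = Complex.exp (↑(-2 * π * (t*w)) * Complex.I) * ((rexp (2*π*σ*t/h) : ℝ) : ℂ) := by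
      rw [Complex.ofReal_exp, ← Complex.exp_add]
      congr 1
      rw [hs]
      have hhne : (h:ℂ) ≠ 0 := by exact_mod_cast hh.ne'
      field_simp
      push_cast
      field_simp
      ring
    rw [abs_of_pos (by positivity), e1, e2]
    rw [show (s * (2*↑π*↑t/↑h) : ℂ) = s * ((2*π*t/h : ℝ) : ℂ) from by push_cast; ring] at *
    rw [e3, hF t, Complex.real_smul, smul_eq_mul]
    have hhc : (h:ℂ) ≠ 0 := by exact_mod_cast hh.ne'
    have hyc : (y:ℂ) ≠ 0 := by exact_mod_cast hy.ne'
    have hec : ((rexp (2*π*t/h) : ℝ) : ℂ) ≠ 0 := by exact_mod_cast (Real.exp_pos _).ne'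
    simp only [hφ]
    push_cast
    field_simp
  have step2 : mellinT g s = (2*π/h : ℂ) * ((y:ℂ)^s * FourierTransform.fourier F w) := by
    rw [step1]
    simp_rw [point]
    rw [integral_const_mul, integral_const_mul]
    congr 2
    rw [fourier_real_eq_integral_exp_smul]
    simp_rw [mul_assoc]
  have hysne : (y:ℂ) ^ s ≠ 0 := by
    simp only [ne_eq, Complex.cpow_eq_zero_iff, not_and_or, not_not]
    left
    exact_mod_cast hy.ne'
  have hhc : (h:ℂ) ≠ 0 := by exact_mod_cast hh.ne'
  rw [step2, Complex.cpow_neg]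
  field_simp


set_option maxHeartbeats 1000000 in
/-- Trapezoid rule for the inverse Mellin integral: if `t ↦ g(y·e^{2πt})·e^{2πσt}` is a
Schwartz function, then `(h/(2π))·Σ_k Mg(σ+ikh)·y^{−σ−ikh} = Σ_k g(y·e^{2πk/h})·e^{2πkσ/h}`
(both series converging absolutely); in particular, the discretization error
`(h/(2π))·Σ_k Mg(σ+ikh)·y^{−σ−ikh} − g(y)` equals `Σ_{k≠0} g(y·e^{2πk/h})·e^{2πkσ/h}`. -/
theorem mellin_trapezoid (g : ℝ → ℂ) (y σ h : ℝ) (hy : 0 < y) (hh : 0 < h)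
    (hG : ∃ G : SchwartzMap ℝ ℂ, ∀ t : ℝ,
      G t = g (y * Real.exp (2 * π * t)) * Real.exp (2 * π * σ * t)) :
    Summable (fun k : ℤ => ‖mellinT g ((σ : ℂ) + Complex.I * k * h)
      * (y : ℂ) ^ (-(σ : ℂ) - Complex.I * k * h)‖) ∧
    Summable (fun k : ℤ => ‖g (y * Real.exp (2 * π * k / h))
      * (Real.exp (2 * π * k * σ / h) : ℂ)‖) ∧
    ((h : ℂ) / (2 * π)) * ∑' k : ℤ, mellinT g ((σ : ℂ) + Complex.I * k * h)
        * (y : ℂ) ^ (-(σ : ℂ) - Complex.I * k * h)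
      = ∑' k : ℤ, g (y * Real.exp (2 * π * k / h))
          * (Real.exp (2 * π * k * σ / h) : ℂ) ∧
    ((h : ℂ) / (2 * π)) * (∑' k : ℤ, mellinT g ((σ : ℂ) + Complex.I * k * h)
        * (y : ℂ) ^ (-(σ : ℂ) - Complex.I * k * h)) - g y
      = ∑' k : {k : ℤ // k ≠ 0}, g (y * Real.exp (2 * π * (k : ℤ) / h))
          * (Real.exp (2 * π * (k : ℤ) * σ / h) : ℂ) := by
  obtain ⟨G, hGdef⟩ := hG
  obtain ⟨F, hF⟩ : ∃ F : SchwartzMap ℝ ℂ,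
      ∀ t : ℝ, F t = g (y * rexp (2*π*t/h)) * rexp (2*π*σ*t/h) := by
    refine ⟨SchwartzMap.compCLMOfContinuousLinearEquiv ℝ
      (ContinuousLinearEquiv.unitsEquivAut ℝ (Units.mk0 (h⁻¹) (inv_ne_zero hh.ne'))) G, ?_⟩
    intro t
    have h0 : (SchwartzMap.compCLMOfContinuousLinearEquiv ℝ
      (ContinuousLinearEquiv.unitsEquivAut ℝ (Units.mk0 (h⁻¹) (inv_ne_zero hh.ne'))) G) t
        = G (t * h⁻¹) := rfl
    rw [h0, hGdef,
      show 2*π*(t*h⁻¹) = 2*π*t/h from by ring,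
      show 2*π*σ*(t*h⁻¹) = 2*π*σ*t/h from by ring]
  have key := key_mellin g hy hh F hF
  set M : ℤ → ℂ := fun k => mellinT g ((σ : ℂ) + Complex.I * k * h)
      * (y : ℂ) ^ (-(σ : ℂ) - Complex.I * k * h) with hMdef
  set T : ℤ → ℂ := fun k : ℤ => g (y * Real.exp (2 * π * k / h))
      * (Real.exp (2 * π * k * σ / h) : ℂ) with hTdef
  have hT : ∀ k : ℤ, T k = F (k : ℝ) := by
    intro k
    rw [hTdef, hF]
    rw [show 2*π*σ*(k:ℝ)/h = 2*π*(k:ℝ)*σ/h from by ring]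
  have hM : ∀ k : ℤ, M k = (2*π/h : ℂ) * FourierTransform.fourier (⇑F) (((-k : ℤ) : ℝ)) := by
    intro k
    have hk := key (((-k : ℤ) : ℝ))
    rw [show ((σ:ℂ) - Complex.I*((((-k : ℤ) : ℝ)):ℂ)*h) = (σ:ℂ) + Complex.I*(k:ℂ)*h from by
      push_cast; ring] at hk
    rw [show (-((σ:ℂ) + Complex.I*(k:ℂ)*h)) = -(σ:ℂ) - Complex.I*(k:ℂ)*h from by ring] at hk
    exact hk
  have hsumF : Summable fun n : ℤ => ‖F (n : ℝ)‖ := schwartz_int_summable F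
  have hsumFT : Summable fun n : ℤ => ‖(SchwartzMap.fourierTransformCLM ℝ F) ((n : ℤ) : ℝ)‖ :=
    schwartz_int_summable _
  have hFT : ∀ w : ℝ, (SchwartzMap.fourierTransformCLM ℝ F) w = FourierTransform.fourier (⇑F) w := by
    intro w; rw [SchwartzMap.fourierTransformCLM_apply]; rfl
  have S2 : Summable fun k : ℤ => ‖T k‖ := hsumF.congr (fun k => by rw [hT k])
  have S1 : Summable fun k : ℤ => ‖M k‖ := by
    have s1 : Summable fun n : ℤ =>
        ‖(SchwartzMap.fourierTransformCLM ℝ F) (((-n : ℤ) : ℝ))‖ := by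
      have e := (Equiv.neg ℤ).summable_iff
        (f := fun n : ℤ => ‖(SchwartzMap.fourierTransformCLM ℝ F) ((n : ℤ) : ℝ)‖)
      simpa [Function.comp_def] using e.mpr hsumFT
    refine (s1.mul_left ‖(2*π/h : ℂ)‖).congr (fun k => ?_)
    rw [hM k, norm_mul, hFT]
  have poisson := F.tsum_eq_tsum_fourier 0
  simp only [zero_add, QuotientAddGroup.mk_zero, fourier_eval_zero, mul_one] at poisson
  have part3 : ((h : ℂ) / (2 * π)) * ∑' k : ℤ, M k = ∑' k : ℤ, T k := by
    have hhc : (h:ℂ) ≠ 0 := by exact_mod_cast hh.ne'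
    have hpc : (π:ℂ) ≠ 0 := by exact_mod_cast pi_ne_zero
    calc ((h : ℂ) / (2 * π)) * ∑' k : ℤ, M k
        = ∑' k : ℤ, ((h : ℂ) / (2 * π)) * M k := tsum_mul_left.symm
      _ = ∑' k : ℤ, (SchwartzMap.fourierTransformCLM ℝ F) (((-k : ℤ) : ℝ)) := by
          refine tsum_congr (fun k => ?_)
          rw [hM k, hFT]
          field_simp
      _ = ∑' k : ℤ, (SchwartzMap.fourierTransformCLM ℝ F) ((k : ℤ) : ℝ) :=
          (Equiv.neg ℤ).tsum_eq (fun n : ℤ => (SchwartzMap.fourierTransformCLM ℝ F) ((n : ℤ) : ℝ))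
      _ = ∑' k : ℤ, F ((k : ℤ) : ℝ) := poisson.symm
      _ = ∑' k : ℤ, T k := tsum_congr (fun k => (hT k).symm)
  refine ⟨S1, S2, part3, ?_⟩
  have hsumT : Summable T := S2.of_norm
  have hT0 : T 0 = g y := by
    rw [hTdef]
    norm_num
  rw [part3, hsumT.tsum_eq_add_tsum_ite 0, hT0, add_sub_cancel_left]
  calc ∑' n : ℤ, (if n = 0 then 0 else T n)
      = ∑' n : ℤ, Set.indicator {k : ℤ | k ≠ 0} T n := by
        refine tsum_congr (fun n => ?_)
        by_cases hn : n = 0 <;> simp [Set.indicator_apply, hn]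
    _ = ∑' k : {k : ℤ | k ≠ 0}, T k := (tsum_subtype _ _).symm
    _ = ∑' k : {k : ℤ // k ≠ 0}, g (y * Real.exp (2 * π * (k : ℤ) / h))
          * (Real.exp (2 * π * (k : ℤ) * σ / h) : ℂ) := rfl
end
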